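/- Let h be a complex number with exp(h) ≠ 1 and set [x] = (exp(hx/2) − exp(−hx/2))/(exp(h/2) − exp(−h/2)) for x ∈ ℂ. For all complex numbers a, b, c, d such that [c−b−1], [c−b+1], [b−c−1], [b−c+1] are all nonzero, one has [a−b][c−d−1]/[c−b−1] − [a−b+1][c−d]/[c−b+1] − [a−c][b−d−1]/[b−c−1] + [a−c+1][b−d]/[b−c+1] = 0. (Vanishing of the coefficient 𝒜_{l,m,j,s} in (A45), used to prove the Cartan relation [e_i, f_j] = 0 for i ≠ j.) -/

import Mathlib

/-!
Writing `[x] = sinh(hx/2) / sinh(h/2)`, the brackets satisfy the three-term (Plücker) relation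
`[x-y][z-w] - [x-z][y-w] = [x-w][z-y]`: expanding `sinh` of differences, it is the Plücker
relation among the 2×2 minors of the matrix with columns `(sinh t, cosh t)`, `t = x, y, z, w`.
Using `[-x] = -[x]` to turn the denominators `[b-c∓1]` into `-[c-b±1]`, the four terms group
into two fractions, and the relation at `(a, b, c-1, d)` and `(a, b-1, c, d)` shows that both
equal `[a-d]`.
-/

/-- The q-bracket `[x] = (exp(hx/2) - exp(-hx/2))/(exp(h/2) - exp(-h/2))`. -/
noncomputable def qbr (h x : ℂ) : ℂ :=
  (Complex.exp (h * x / 2) - Complex.exp (-(h * x) / 2)) /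
    (Complex.exp (h / 2) - Complex.exp (-h / 2))

theorem Complex.sinh_plucker (x y z w : ℂ) :
    sinh (x - y) * sinh (z - w) - sinh (x - z) * sinh (y - w) = sinh (x - w) * sinh (z - y) := by
  simp only [sinh_sub]
  ring

theorem qbr_eq_sinh_div (h x : ℂ) : qbr h x = Complex.sinh (h * x / 2) / Complex.sinh (h / 2) := by
  rw [qbr, Complex.sinh, Complex.sinh, neg_div, neg_div, div_div_div_cancel_right₀ two_ne_zero]

theorem qbr_neg (h x : ℂ) : qbr h (-x) = -qbr h x := by
  rw [qbr_eq_sinh_div, qbr_eq_sinh_div, mul_neg, neg_div, Complex.sinh_neg, neg_div]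

theorem qbr_plucker (h x y z w : ℂ) :
    qbr h (x - y) * qbr h (z - w) - qbr h (x - z) * qbr h (y - w)
      = qbr h (x - w) * qbr h (z - y) := by
  simp only [qbr_eq_sinh_div, mul_sub, sub_div]
  linear_combination
    Complex.sinh_plucker (h * x / 2) (h * y / 2) (h * z / 2) (h * w / 2) / Complex.sinh (h / 2) ^ 2

theorem identity_A45_general (h : ℂ) (a b c d : ℂ)
    (h1 : qbr h (c - b - 1) ≠ 0) (h2 : qbr h (c - b + 1) ≠ 0) :
    qbr h (a - b) * qbr h (c - d - 1) / qbr h (c - b - 1)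
      - qbr h (a - b + 1) * qbr h (c - d) / qbr h (c - b + 1)
      - qbr h (a - c) * qbr h (b - d - 1) / qbr h (b - c - 1)
      + qbr h (a - c + 1) * qbr h (b - d) / qbr h (b - c + 1) = 0 := by
  have hminus : qbr h (b - c - 1) = -qbr h (c - b + 1) := by rw [← qbr_neg]; ring_nf
  have hplus : qbr h (b - c + 1) = -qbr h (c - b - 1) := by rw [← qbr_neg]; ring_nf
  have hfirst : qbr h (a - b) * qbr h (c - d - 1) - qbr h (a - c + 1) * qbr h (b - d)
      = qbr h (a - d) * qbr h (c - b - 1) := by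
    convert qbr_plucker h a b (c - 1) d using 3 <;> ring_nf
  have hsecond : qbr h (a - b + 1) * qbr h (c - d) - qbr h (a - c) * qbr h (b - d - 1)
      = qbr h (a - d) * qbr h (c - b + 1) := by
    convert qbr_plucker h a (b - 1) c d using 3 <;> ring_nf
  rw [hminus, hplus]
  field_simp
  linear_combination qbr h (c - b + 1) * hfirst - qbr h (c - b - 1) * hsecond

/-- Vanishing of the coefficient in (A45). -/
theorem identity_A45 (h : ℂ) (hh : Complex.exp h ≠ 1) (a b c d : ℂ)
    (h1 : qbr h (c - b - 1) ≠ 0) (h2 : qbr h (c - b + 1) ≠ 0)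
    (h3 : qbr h (b - c - 1) ≠ 0) (h4 : qbr h (b - c + 1) ≠ 0) :
    qbr h (a - b) * qbr h (c - d - 1) / qbr h (c - b - 1)
      - qbr h (a - b + 1) * qbr h (c - d) / qbr h (c - b + 1)
      - qbr h (a - c) * qbr h (b - d - 1) / qbr h (b - c - 1)
      + qbr h (a - c + 1) * qbr h (b - d) / qbr h (b - c + 1) = 0 :=
  identity_A45_general h a b c d h1 h2
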